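/- arXiv:2504.13432 — 6 statements merged into one kernel-verified Lean document; each statement's English description precedes it below -/
import Mathlib

section
/- Let f : ℂ → ℂ be continuously real-differentiable (C¹ as a map of ℝ² ≅ ℂ) and proper (preimages of compact sets are compact). Suppose there is a constant k < 1 such that f_z(p) ≠ 0 and |f_z̄(p)| ≤ k·|f_z(p)| for every p ∈ ℂ (i.e. the Beltrami coefficient μ = f_z̄/f_z satisfies ‖μ‖_∞ ≤ k < 1). Then f is bijective. -/
open Set Topology Filter

/-- The real derivative at each point is a linear isomorphism. -/
lemma beltrami_deriv_equiv (f : ℂ → ℂ) (hf : ContDiff ℝ 1 f) (k : ℝ) (hk : k < 1)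
    (h : ∀ p : ℂ,
      (fderiv ℝ f p 1 - Complex.I * fderiv ℝ f p Complex.I) / 2 ≠ 0 ∧
      ‖(fderiv ℝ f p 1 + Complex.I * fderiv ℝ f p Complex.I) / 2‖
        ≤ k * ‖(fderiv ℝ f p 1 - Complex.I * fderiv ℝ f p Complex.I) / 2‖)
    (p : ℂ) : ∃ e : ℂ ≃L[ℝ] ℂ, (e : ℂ →L[ℝ] ℂ) = fderiv ℝ f p := by
  set L := fderiv ℝ f p with hL
  obtain ⟨ha0, hab⟩ := h p
  set u := L 1 with hu
  set v := L Complex.I with hv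
  set a := (u - Complex.I * v) / 2 with ha
  set b := (u + Complex.I * v) / 2 with hb
  have ha0' : a ≠ 0 := ha0
  have hab' : ‖b‖ ≤ k * ‖a‖ := hab
  -- L z = a z + b conj z
  have key0 : ∀ x y : ℝ, L (x • (1:ℂ) + y • Complex.I)
      = a * (x • (1:ℂ) + y • Complex.I) + b * (starRingEnd ℂ (x • (1:ℂ) + y • Complex.I)) := by
    intro x y
    rw [map_add, map_smul, map_smul]
    simp only [Complex.real_smul, map_add, map_mul, Complex.conj_ofReal, Complex.conj_I,
      smul_eq_mul, mul_one, ← hu, ← hv]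
    rw [ha, hb]
    linear_combination ((y:ℂ) * v) * Complex.I_sq
  have key : ∀ z : ℂ, L z = a * z + b * (starRingEnd ℂ z) := by
    intro z
    have hx : (z.re : ℝ) • (1:ℂ) + (z.im : ℝ) • Complex.I = z := by
      simp [Complex.real_smul, Complex.re_add_im]
    have := key0 z.re z.im
    rwa [hx] at this
  -- injectivity
  have hinj : Function.Injective L := by
    intro z w hzw
    by_contra hne
    have hzw0 : z - w ≠ 0 := sub_ne_zero.mpr hne
    have hz : a * (z - w) + b * (starRingEnd ℂ (z - w)) = 0 := by
      rw [← key, map_sub, hzw, sub_self]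
    have h1 : ‖a‖ * ‖z - w‖
        ≤ ‖b‖ * ‖z - w‖ := by
      have heq : a * (z - w) = -(b * (starRingEnd ℂ (z - w))) := by linear_combination hz
      refine le_of_eq ?_
      calc ‖a‖ * ‖z - w‖ = ‖a * (z - w)‖ := by
            rw [norm_mul]
        _ = ‖b * (starRingEnd ℂ (z - w))‖ := by
            rw [heq, norm_neg]
        _ = ‖b‖ * ‖z - w‖ := by
            rw [norm_mul, Complex.norm_conj]
    have habs : (0:ℝ) < ‖a‖ := norm_pos_iff.mpr ha0'
    have hzabs : (0:ℝ) < ‖z - w‖ := norm_pos_iff.mpr hzw0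
    have h3 : ‖a‖ ≤ ‖b‖ := le_of_mul_le_mul_right h1 hzabs
    nlinarith
  have hbij : Function.Bijective (L : ℂ →ₗ[ℝ] ℂ) :=
    ⟨hinj, (LinearMap.injective_iff_surjective (f := (L : ℂ →ₗ[ℝ] ℂ))).mp hinj⟩
  refine ⟨(LinearEquiv.ofBijective (L : ℂ →ₗ[ℝ] ℂ) hbij).toContinuousLinearEquiv, ?_⟩
  ext z
  simp

lemma beltrami_isLocalHomeomorph (f : ℂ → ℂ) (hf : ContDiff ℝ 1 f) (k : ℝ) (hk : k < 1)
    (h : ∀ p : ℂ,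
      (fderiv ℝ f p 1 - Complex.I * fderiv ℝ f p Complex.I) / 2 ≠ 0 ∧
      ‖(fderiv ℝ f p 1 + Complex.I * fderiv ℝ f p Complex.I) / 2‖
        ≤ k * ‖(fderiv ℝ f p 1 - Complex.I * fderiv ℝ f p Complex.I) / 2‖) :
    IsLocalHomeomorph f := by
  intro p
  obtain ⟨e, he⟩ := beltrami_deriv_equiv f hf k hk h p
  have hdiff : HasFDerivAt f (e : ℂ →L[ℝ] ℂ) p := by
    rw [he]
    exact (hf.differentiable one_ne_zero p).hasFDerivAt
  have hca : ContDiffAt ℝ 1 f p := hf.contDiffAt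
  exact ⟨hca.toOpenPartialHomeomorph f hdiff one_ne_zero,
    hca.mem_toOpenPartialHomeomorph_source hdiff one_ne_zero,
    (hca.toOpenPartialHomeomorph_coe hdiff one_ne_zero).symm⟩


open Set Topology Filter

/-- Even-covering-type lemma: around any point of the base there is an open set `W`
such that any preconnected set mapping into `W` is contained in the source of a
single partial homeomorphism whose target contains all of `W`. -/
lemma qc_star_lemma {f : ℂ → ℂ} (hl : IsLocalHomeomorph f) (hp : IsProperMap f) (y : ℂ) :
    ∃ W : Set ℂ, IsOpen W ∧ y ∈ W ∧ ∀ A : Set ℂ, A.Nonempty → IsPreconnected A →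
      f '' A ⊆ W → ∃ e : OpenPartialHomeomorph ℂ ℂ, A ⊆ e.source ∧
        Set.EqOn f e e.source ∧ W ⊆ e.target := by
  classical
  set e : ℂ → OpenPartialHomeomorph ℂ ℂ := fun x => Classical.choose (hl x) with he_def
  have hes : ∀ x, x ∈ (e x).source := fun x => (Classical.choose_spec (hl x)).1
  have hef : ∀ x, f = ⇑(e x) := fun x => (Classical.choose_spec (hl x)).2
  -- the fiber is finite
  have hfin : (f ⁻¹' {y}).Finite := by
    have hcomp : IsCompact (f ⁻¹' {y}) := hp.isCompact_preimage isCompact_singleton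
    obtain ⟨t, hts, hcover⟩ := hcomp.elim_nhds_subcover (fun x => (e x).source)
      (fun x _ => (e x).open_source.mem_nhds (hes x))
    refine Set.Finite.subset t.finite_toSet fun x hx => ?_
    obtain ⟨x', hx', hmem⟩ := Set.mem_iUnion₂.mp (hcover hx)
    have hfx : f x = f x' := by
      have h1 : f x = y := hx
      have h2 : f x' = y := hts x' hx'
      rw [h1, h2]
    have : (e x') x = (e x') x' := by rw [← hef x', hfx]
    have hxx : x = x' := (e x').injOn hmem (hes x') this
    rwa [hxx]
  set Fs : Finset ℂ := hfin.toFinset with hFs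
  -- separating open sets
  set D : ℂ → Set ℂ := fun x => ⋂ x' ∈ Fs.erase x, {z | dist z x < dist z x'} with hD
  have hD_open : ∀ x, IsOpen (D x) := fun x =>
    isOpen_biInter_finset fun x' _ =>
      isOpen_lt (continuous_id.dist continuous_const) (continuous_id.dist continuous_const)
  have hxD : ∀ x, x ∈ D x := by
    intro x
    refine Set.mem_iInter₂.mpr fun x' hx' => ?_
    have hne : x' ≠ x := (Finset.mem_erase.mp hx').1
    simpa using dist_pos.mpr hne.symm
  have hDdisj : ∀ x ∈ Fs, ∀ x' ∈ Fs, x ≠ x' → D x ∩ D x' = ∅ := by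
    intro x hx x' hx' hne
    ext z
    simp only [Set.mem_inter_iff, Set.mem_empty_iff_false, iff_false, not_and]
    intro hzx hzx'
    have h1 : dist z x < dist z x' := Set.mem_iInter₂.mp hzx x' (Finset.mem_erase.mpr ⟨hne.symm, hx'⟩)
    have h2 : dist z x' < dist z x := Set.mem_iInter₂.mp hzx' x (Finset.mem_erase.mpr ⟨hne, hx⟩)
    linarith
  set E : ℂ → OpenPartialHomeomorph ℂ ℂ := fun x => (e x).restrOpen (D x) (hD_open x) with hE
  have hE_coe : ∀ x, ⇑(E x) = ⇑(e x) := fun x => rfl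
  have hE_source : ∀ x, (E x).source = (e x).source ∩ D x := fun x =>
    (e x).restrOpen_source (D x) (hD_open x)
  have hE_mem : ∀ x ∈ Fs, x ∈ (E x).source := by
    intro x hx
    rw [hE_source]
    exact ⟨hes x, hxD x⟩
  -- the closed set avoided by the fiber
  set C : Set ℂ := (⋃ x ∈ Fs, (E x).source)ᶜ with hC
  have hC_closed : IsClosed C := (isOpen_biUnion fun x _ => (E x).open_source).isClosed_compl
  set W : Set ℂ := (f '' C)ᶜ ∩ ⋂ x ∈ Fs, (E x).target with hW
  have hW_open : IsOpen W :=
    (hp.isClosedMap C hC_closed).isOpen_compl.inter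
      (isOpen_biInter_finset fun x _ => (E x).open_target)
  have hmemFs : ∀ x, x ∈ Fs ↔ f x = y := by
    intro x
    rw [hFs, Set.Finite.mem_toFinset]
    rfl
  have hyW : y ∈ W := by
    constructor
    · rintro ⟨c, hcC, hcy⟩
      have hcFs : c ∈ Fs := (hmemFs c).mpr hcy
      exact hcC (Set.mem_biUnion hcFs (hE_mem c hcFs))
    · refine Set.mem_iInter₂.mpr fun x hx => ?_
      have : (E x) x ∈ (E x).target := (E x).map_source (hE_mem x hx)
      have hfx : (E x) x = y := by
        rw [hE_coe, ← hef x]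
        exact (hmemFs x).mp hx
      rwa [hfx] at this
  refine ⟨W, hW_open, hyW, ?_⟩
  intro A hA_ne hA_conn hA_sub
  have hAsub : A ⊆ ⋃ x ∈ Fs, (E x).source := by
    intro a haA
    have hfa : f a ∈ W := hA_sub ⟨a, haA, rfl⟩
    have : a ∉ C := fun haC => hfa.1 ⟨a, haC, rfl⟩
    simpa [hC] using this
  obtain ⟨a₀, ha₀⟩ := hA_ne
  obtain ⟨x₀, hx₀Fs, ha₀U⟩ := Set.mem_iUnion₂.mp (hAsub ha₀)
  have hAx₀ : A ⊆ (E x₀).source := by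
    by_contra hnot
    obtain ⟨a₁, ha₁A, ha₁n⟩ := not_subset.mp hnot
    obtain ⟨x₁, hx₁Fs, ha₁U⟩ := Set.mem_iUnion₂.mp (hAsub ha₁A)
    have hx₁ne : x₁ ≠ x₀ := by
      rintro rfl
      exact ha₁n ha₁U
    obtain ⟨z, hzA, hzu, hzv⟩ := hA_conn (E x₀).source (⋃ x ∈ Fs.erase x₀, (E x).source)
      (E x₀).open_source (isOpen_biUnion fun x _ => (E x).open_source)
      (by
        intro a ha
        obtain ⟨x, hxFs, haU⟩ := Set.mem_iUnion₂.mp (hAsub ha)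
        rcases eq_or_ne x x₀ with rfl | hne
        · exact Or.inl haU
        · exact Or.inr (Set.mem_biUnion (Finset.mem_erase.mpr ⟨hne, hxFs⟩) haU))
      ⟨a₀, ha₀, ha₀U⟩
      ⟨a₁, ha₁A, Set.mem_biUnion (Finset.mem_erase.mpr ⟨hx₁ne, hx₁Fs⟩) ha₁U⟩
    obtain ⟨x, hxE, hzx⟩ := Set.mem_iUnion₂.mp hzv
    have hxne : x₀ ≠ x := ((Finset.mem_erase.mp hxE).1).symm
    have hz₀ : z ∈ D x₀ := ((hE_source x₀) ▸ hzu).2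
    have hzx' : z ∈ D x := ((hE_source x) ▸ hzx).2
    have := hDdisj x₀ hx₀Fs x (Finset.mem_erase.mp hxE).2 hxne
    exact absurd (Set.mem_inter hz₀ hzx') (by rw [this]; exact Set.notMem_empty z)
  refine ⟨E x₀, hAx₀, ?_, ?_⟩
  · intro z hz
    rw [hE_coe, ← hef x₀]
  · intro w hw
    exact Set.mem_iInter₂.mp hw.2 x₀ hx₀Fs


open Set Topology Filter

section Lifting

variable {f : ℂ → ℂ}

/-- Fibers of a proper local homeomorphism are finite. -/
lemma qc_fiber_finite (hl : IsLocalHomeomorph f) (hp : IsProperMap f) (y : ℂ) :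
    (f ⁻¹' {y}).Finite := by
  classical
  have hcomp : IsCompact (f ⁻¹' {y}) := hp.isCompact_preimage isCompact_singleton
  obtain ⟨t, hts, hcover⟩ := hcomp.elim_nhds_subcover
    (fun x => (Classical.choose (hl x)).source)
    (fun x _ => (Classical.choose (hl x)).open_source.mem_nhds (Classical.choose_spec (hl x)).1)
  refine Set.Finite.subset t.finite_toSet fun x hx => ?_
  obtain ⟨x', hx', hmem⟩ := Set.mem_iUnion₂.mp (hcover hx)
  have hfx : f x = f x' := by
    have h1 : f x = y := hx
    have h2 : f x' = y := hts x' hx'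
    rw [h1, h2]
  have hco := (Classical.choose_spec (hl x')).2
  have : (Classical.choose (hl x')) x = (Classical.choose (hl x')) x' := by rw [← hco, hfx]
  have hxx : x = x' := (Classical.choose (hl x')).injOn hmem (Classical.choose_spec (hl x')).1 this
  rwa [hxx]

/-- Path lifting for proper local homeomorphisms (statement on `Icc 0 1 ⊆ ℝ`),
assuming the even covering lemma `qc_star_lemma`. -/
lemma qc_lift_path (hl : IsLocalHomeomorph f) (hp : IsProperMap f)
    (hstar : ∀ y : ℂ, ∃ W : Set ℂ, IsOpen W ∧ y ∈ W ∧ ∀ A : Set ℂ, A.Nonempty →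
      IsPreconnected A → f '' A ⊆ W → ∃ e : OpenPartialHomeomorph ℂ ℂ, A ⊆ e.source ∧
        Set.EqOn f e e.source ∧ W ⊆ e.target)
    (γ : ℝ → ℂ) (hγ : ContinuousOn γ (Icc 0 1)) (x₀ : ℂ) (h0 : f x₀ = γ 0) :
    ∃ g : ℝ → ℂ, ContinuousOn g (Icc 0 1) ∧ g 0 = x₀ ∧ ∀ t ∈ Icc (0:ℝ) 1, f (g t) = γ t := by
  classical
  set S : Set ℝ := {t | t ∈ Icc (0:ℝ) 1 ∧ ∃ g : ℝ → ℂ, ContinuousOn g (Icc 0 t) ∧ g 0 = x₀ ∧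
    ∀ u ∈ Icc (0:ℝ) t, f (g u) = γ u} with hS
  have h0S : (0:ℝ) ∈ S := by
    refine ⟨⟨le_refl 0, zero_le_one⟩, fun _ => x₀, continuousOn_const, rfl, fun u hu => ?_⟩
    have : u = 0 := le_antisymm hu.2 hu.1
    rw [this, h0]
  have hS_ne : S.Nonempty := ⟨0, h0S⟩
  have hS_bdd : BddAbove S := ⟨1, fun t ht => ht.1.2⟩
  set T := sSup S with hT
  have hT0 : 0 ≤ T := le_csSup hS_bdd h0S
  have hT1 : T ≤ 1 := csSup_le hS_ne fun t ht => ht.1.2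
  obtain ⟨W, hW_open, hyW, hW⟩ := hstar (γ T)
  have hγT : ContinuousWithinAt γ (Icc 0 1) T := hγ T ⟨hT0, hT1⟩
  have hpre : γ ⁻¹' W ∈ 𝓝[Icc (0:ℝ) 1] T := hγT.preimage_mem_nhdsWithin (hW_open.mem_nhds hyW)
  obtain ⟨δ, hδ, hball⟩ := Metric.mem_nhdsWithin_iff.mp hpre
  obtain ⟨t, htS, htlt⟩ := exists_lt_of_lt_csSup hS_ne (by linarith : T - δ/2 < T)
  have htT : t ≤ T := le_csSup hS_bdd htS
  obtain ⟨htIcc, g, hg_cont, hg0, hg_lift⟩ := htS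
  -- the endpoint of the partial lift maps into W
  have hγtW : γ t ∈ W := by
    apply hball
    constructor
    · rw [Metric.mem_ball, Real.dist_eq, abs_sub_lt_iff]
      constructor <;> linarith
    · exact htIcc
  obtain ⟨e, hgte, hEqOn, hWtarget⟩ := hW {g t} ⟨g t, rfl⟩ isPreconnected_singleton
    (by
      rw [Set.image_singleton, Set.singleton_subset_iff, hg_lift t ⟨htIcc.1, le_refl t⟩]
      exact hγtW)
  have hgt_mem : g t ∈ e.source := hgte rfl
  set t₁ : ℝ := min (T + δ/2) 1 with ht₁def
  have htt₁ : t ≤ t₁ := le_min (by linarith) htIcc.2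
  have ht₁Icc : t₁ ∈ Icc (0:ℝ) 1 := ⟨le_trans htIcc.1 htt₁, min_le_right _ _⟩
  have hγW : ∀ u ∈ Icc t t₁, γ u ∈ W := by
    intro u hu
    have hu1 : u ≤ T + δ/2 := le_trans hu.2 (min_le_left _ _)
    have hu0 : 0 ≤ u := le_trans htIcc.1 hu.1
    have hu2 : u ≤ 1 := le_trans hu.2 (min_le_right _ _)
    apply hball
    constructor
    · rw [Metric.mem_ball, Real.dist_eq, abs_sub_lt_iff]
      constructor <;> linarith [hu.1]
    · exact ⟨hu0, hu2⟩
  have hagree : g t = e.symm (γ t) := by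
    have h1 : e (g t) = γ t := by
      rw [← hEqOn hgt_mem]
      exact hg_lift t ⟨htIcc.1, le_refl t⟩
    rw [← h1, e.left_inv hgt_mem]
  set g₁ : ℝ → ℂ := fun u => if u ≤ t then g u else e.symm (γ u) with hg₁
  have hg₁_cont : ContinuousOn g₁ (Icc 0 t₁) := by
    apply ContinuousOn.if
    · intro a ha
      have hfr : frontier {a : ℝ | a ≤ t} = {t} := frontier_Iic
      have hat : a = t := by
        have := ha.2
        rw [hfr] at this
        exact this
      rw [hat]
      exact hagree
    · refine hg_cont.mono ?_
      intro u hu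
      have : u ∈ closure {a : ℝ | a ≤ t} := hu.2
      rw [show {a : ℝ | a ≤ t} = Iic t from rfl, closure_Iic] at this
      exact ⟨hu.1.1, this⟩
    · have hcl : closure {a : ℝ | ¬a ≤ t} = Ici t := by
        have h' : {a : ℝ | ¬a ≤ t} = Ioi t := by ext a; simp [not_le]
        rw [h', closure_Ioi]
      have hsub : Icc 0 t₁ ∩ closure {a : ℝ | ¬a ≤ t} ⊆ Icc t t₁ := by
        intro u hu
        have hut : u ∈ Ici t := by rw [← hcl]; exact hu.2
        exact ⟨hut, hu.1.2⟩
      have hcont2 : ContinuousOn (fun u => e.symm (γ u)) (Icc t t₁) := by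
        apply e.continuousOn_symm.comp
          (hγ.mono (fun u hu => ⟨le_trans htIcc.1 hu.1, le_trans hu.2 ht₁Icc.2⟩))
        intro u hu
        exact hWtarget (hγW u hu)
      exact hcont2.mono hsub
  have hg₁0 : g₁ 0 = x₀ := by
    rw [hg₁]
    simp only [if_pos htIcc.1]
    exact hg0
  have hg₁_lift : ∀ u ∈ Icc (0:ℝ) t₁, f (g₁ u) = γ u := by
    intro u hu
    rw [hg₁]
    by_cases hut : u ≤ t
    · simp only [if_pos hut]
      exact hg_lift u ⟨hu.1, hut⟩
    · simp only [if_neg hut]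
      have hu' : u ∈ Icc t t₁ := ⟨le_of_not_ge hut, hu.2⟩
      have hγu : γ u ∈ e.target := hWtarget (hγW u hu')
      rw [hEqOn (e.map_target hγu), e.right_inv hγu]
  have ht₁S : t₁ ∈ S := ⟨ht₁Icc, g₁, hg₁_cont, hg₁0, hg₁_lift⟩
  have ht₁T : t₁ ≤ T := le_csSup hS_bdd ht₁S
  have hT_eq : T = 1 := by
    by_contra hne
    have hTlt : T < 1 := lt_of_le_of_ne hT1 hne
    have : T < t₁ := lt_min (by linarith) hTlt
    linarith
  have ht₁1 : t₁ = 1 := by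
    rw [ht₁def, hT_eq]
    exact min_eq_right (by linarith)
  rw [ht₁1] at ht₁S
  exact ht₁S.2

end Lifting




lemma qc_injective {f : ℂ → ℂ} (hl : IsLocalHomeomorph f)
    (hstar : ∀ y : ℂ, ∃ W : Set ℂ, IsOpen W ∧ y ∈ W ∧ ∀ A : Set ℂ, A.Nonempty →
      IsPreconnected A → f '' A ⊆ W → ∃ e : OpenPartialHomeomorph ℂ ℂ, A ⊆ e.source ∧
        Set.EqOn f e e.source ∧ W ⊆ e.target)
    (hfin : ∀ y : ℂ, (f ⁻¹' {y}).Finite)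
    (hlift : ∀ (γ : ℝ → ℂ), ContinuousOn γ (Icc 0 1) → ∀ x₀ : ℂ, f x₀ = γ 0 →
      ∃ g : ℝ → ℂ, ContinuousOn g (Icc 0 1) ∧ g 0 = x₀ ∧ ∀ t ∈ Icc (0:ℝ) 1, f (g t) = γ t) :
    Function.Injective f := by
  classical
  have hcont : Continuous f := hl.continuous
  intro x₁ x₂ hx
  set y₁ := f x₁ with hy₁
  set c : ℝ → ℂ := fun s => x₁ + (s:ℂ) * (x₂ - x₁) with hc
  have hc_cont : Continuous c :=
    continuous_const.add ((Complex.continuous_ofReal).mul continuous_const)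
  set Φ : ℝ × ℝ → ℂ := fun p => (1 - (p.2:ℂ)) * f (c p.1) + (p.2:ℂ) * y₁ with hΦ
  have hΦ_cont : Continuous Φ := by
    apply Continuous.add
    · exact (continuous_const.sub (Complex.continuous_ofReal.comp continuous_snd)).mul
        (hcont.comp (hc_cont.comp continuous_fst))
    · exact (Complex.continuous_ofReal.comp continuous_snd).mul continuous_const
  have hΦ0 : ∀ s, Φ (s, 0) = f (c s) := by
    intro s
    simp [hΦ]
  have hlifts : ∀ s : ℝ, ∃ g : ℝ → ℂ, ContinuousOn g (Icc 0 1) ∧ g 0 = c s ∧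
      ∀ t ∈ Icc (0:ℝ) 1, f (g t) = Φ (s, t) :=
    fun s => hlift (fun t => Φ (s, t))
      ((hΦ_cont.comp (continuous_const.prodMk continuous_id)).continuousOn)
      (c s) (hΦ0 s).symm
  choose L hL_cont hL0 hL_lift using hlifts
  have huniq : ∀ (s : ℝ) (g : ℝ → ℂ), ContinuousOn g (Icc 0 1) → g 0 = c s →
      (∀ t ∈ Icc (0:ℝ) 1, f (g t) = Φ (s, t)) → EqOn g (L s) (Icc 0 1) := by
    intro s g hgc hg0 hgl
    refine (T2Space.isSeparatedMap f).eqOn_of_comp_eqOn hl.isLocallyInjective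
      isPreconnected_Icc hgc (hL_cont s) ?_ (⟨le_refl 0, zero_le_one⟩ : (0:ℝ) ∈ Icc (0:ℝ) 1) ?_
    · intro u hu
      show f (g u) = f (L s u)
      rw [hgl u hu, hL_lift s u hu]
    · rw [hg0, hL0 s]
  -- continuity in the parameter of the endpoint of the lift
  have main : Continuous (fun s => L s 1) := by
    rw [continuous_iff_continuousAt]
    intro s₀
    choose W hW_open hW_mem hW_prop using hstar
    have hKc : IsCompact (({s₀} : Set ℝ) ×ˢ Icc (0:ℝ) 1) := isCompact_singleton.prod isCompact_Icc
    have hcov : (({s₀} : Set ℝ) ×ˢ Icc (0:ℝ) 1) ⊆ ⋃ y : ℂ, Φ ⁻¹' (W y) := by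
      rintro ⟨s, t⟩ ⟨hs, ht⟩
      exact Set.mem_iUnion.mpr ⟨Φ (s, t), hW_mem _⟩
    obtain ⟨δ, hδ, hleb⟩ := lebesgue_number_lemma_of_metric hKc
      (fun y => (hW_open y).preimage hΦ_cont) hcov
    obtain ⟨N, hN⟩ := exists_nat_one_div_lt hδ
    have hNpos : (0:ℝ) < (N:ℝ) + 1 := by positivity
    have ind : ∀ j : ℕ, j ≤ N + 1 → ContinuousAt (fun s => L s ((j : ℝ) / ((N:ℝ) + 1))) s₀ := by
      intro j
      induction j with
      | zero =>
        intro _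
        have heq : (fun s => L s (((0:ℕ) : ℝ) / ((N:ℝ) + 1))) = c := by
          funext s
          rw [show (((0:ℕ):ℝ)) / ((N:ℝ) + 1) = 0 by simp, hL0 s]
        rw [heq]
        exact hc_cont.continuousAt
      | succ j ih =>
        intro hj
        have hjN : j ≤ N + 1 := le_trans (Nat.le_succ j) hj
        set tb : ℝ := ((j : ℕ) : ℝ) / ((N:ℝ) + 1) with htb
        set tb' : ℝ := (((j+1 : ℕ)) : ℝ) / ((N:ℝ) + 1) with htb'
        have hcast : (((j:ℕ)):ℝ) ≤ (((j+1:ℕ)):ℝ) := by push_cast; linarith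
        have htble : tb ≤ tb' := (div_le_div_iff_of_pos_right hNpos).mpr hcast
        have htbIcc : tb ∈ Icc (0:ℝ) 1 := by
          constructor
          · positivity
          · rw [div_le_one hNpos]
            exact_mod_cast hjN
        have htb'Icc : tb' ∈ Icc (0:ℝ) 1 := by
          constructor
          · positivity
          · rw [div_le_one hNpos]
            exact_mod_cast hj
        have hsub : Icc tb tb' ⊆ Icc (0:ℝ) 1 :=
          fun u hu => ⟨le_trans htbIcc.1 hu.1, le_trans hu.2 htb'Icc.2⟩
        have hgap : tb' - tb = 1 / ((N:ℝ) + 1) := by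
          rw [htb, htb', div_sub_div_same]
          push_cast
          ring_nf
        obtain ⟨y, hy⟩ := hleb (s₀, tb) ⟨rfl, htbIcc⟩
        have hΦW : ∀ s, dist s s₀ < δ → ∀ u ∈ Icc tb tb', Φ (s, u) ∈ W y := by
          intro s hs u hu
          apply hy
          rw [Metric.mem_ball, Prod.dist_eq]
          apply max_lt hs
          rw [Real.dist_eq, abs_sub_lt_iff]
          constructor
          · linarith [hu.1, hu.2, hgap, hN]
          · linarith [hu.1, hu.2, hgap, hN]
        have htbmem : tb ∈ Icc tb tb' := ⟨le_refl tb, htble⟩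
        have htb'mem : tb' ∈ Icc tb tb' := ⟨htble, le_refl tb'⟩
        obtain ⟨e, hAe, hEq, hWe⟩ := hW_prop y (L s₀ '' Icc tb tb')
          ⟨L s₀ tb, ⟨tb, htbmem, rfl⟩⟩
          ((isPreconnected_Icc).image _ ((hL_cont s₀).mono hsub))
          (by
            rintro w ⟨z, ⟨u, hu, rfl⟩, rfl⟩
            rw [hL_lift s₀ u (hsub hu)]
            exact hΦW s₀ (by simpa [dist_self] using hδ) u hu)
        have hL₀tb_mem : L s₀ tb ∈ e.source := hAe ⟨tb, htbmem, rfl⟩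
        have ev₁ : ∀ᶠ s in 𝓝 s₀, dist s s₀ < δ := by
          filter_upwards [Metric.ball_mem_nhds s₀ hδ] with s hs
          simpa [Metric.mem_ball] using hs
        have ev₂ : ∀ᶠ s in 𝓝 s₀, L s tb ∈ e.source :=
          (ih hjN).eventually_mem (e.open_source.mem_nhds hL₀tb_mem)
        have heq_ev : ∀ᶠ s in 𝓝 s₀, L s tb' = e.symm (Φ (s, tb')) := by
          filter_upwards [ev₁, ev₂] with s hs₁ hs₂
          have hMW : ∀ u ∈ Icc tb tb', Φ (s, u) ∈ W y := hΦW s hs₁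
          have hM_cont : ContinuousOn (fun u => e.symm (Φ (s, u))) (Icc tb tb') := by
            have h1 : ContinuousOn (fun u : ℝ => Φ (s, u)) (Icc tb tb') :=
              (hΦ_cont.comp (continuous_const.prodMk continuous_id)).continuousOn
            exact e.continuousOn_symm.comp h1 (fun u hu => hWe (hMW u hu))
          have hM_lift : ∀ u ∈ Icc tb tb', f (e.symm (Φ (s, u))) = Φ (s, u) := by
            intro u hu
            have hmem : Φ (s, u) ∈ e.target := hWe (hMW u hu)
            rw [hEq (e.map_target hmem), e.right_inv hmem]
          have hMtb : L s tb = e.symm (Φ (s, tb)) := by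
            have hm2 : e.symm (Φ (s, tb)) ∈ e.source := e.map_target (hWe (hMW tb htbmem))
            have h1 : e (L s tb) = e (e.symm (Φ (s, tb))) := by
              rw [← hEq hs₂, ← hEq hm2]
              rw [hL_lift s tb (hsub htbmem), hM_lift tb htbmem]
            exact e.injOn hs₂ hm2 h1
          have heqon := (T2Space.isSeparatedMap f).eqOn_of_comp_eqOn hl.isLocallyInjective
            (isPreconnected_Icc (a := tb) (b := tb')) ((hL_cont s).mono hsub) hM_cont
            (fun u hu => by
              show f (L s u) = f (e.symm (Φ (s, u)))
              rw [hL_lift s u (hsub hu), hM_lift u hu])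
            htbmem hMtb
          exact heqon htb'mem
        have htarget_cont : ContinuousAt (fun s => e.symm (Φ (s, tb'))) s₀ := by
          have hmem : Φ (s₀, tb') ∈ e.target :=
            hWe (hΦW s₀ (by simpa [dist_self] using hδ) tb' htb'mem)
          have h1 : ContinuousAt e.symm (Φ (s₀, tb')) :=
            e.symm.continuousAt (by rwa [e.symm_source])
          have h2 : ContinuousAt (fun s : ℝ => Φ (s, tb')) s₀ :=
            (hΦ_cont.comp (continuous_id.prodMk continuous_const)).continuousAt
          have h3 := ContinuousAt.comp (f := fun s : ℝ => Φ (s, tb')) (x := s₀) h1 h2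
          exact h3
        exact htarget_cont.congr (heq_ev.mono fun s hs => hs.symm)
    have hNN : (((N+1 : ℕ)):ℝ) / ((N:ℝ) + 1) = 1 := by
      push_cast
      exact div_self hNpos.ne'
    have hfinal := ind (N+1) le_rfl
    have heqf : (fun s => L s ((((N+1:ℕ)):ℝ) / ((N:ℝ) + 1))) = (fun s => L s 1) := by
      funext s
      rw [hNN]
    rwa [heqf] at hfinal
  -- endpoints
  have hc0 : c 0 = x₁ := by simp [hc]
  have hc1 : c 1 = x₂ := by
    rw [hc]
    simp
  have hfc0 : f (c 0) = y₁ := by rw [hc0]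
  have hfc1 : f (c 1) = y₁ := by rw [hc1, ← hx]
  have hφ0 : L 0 1 = x₁ := by
    have hlift0 : ∀ t ∈ Icc (0:ℝ) 1, f ((fun _ => x₁) t) = Φ (0, t) := by
      intro t ht
      show f x₁ = Φ (0, t)
      rw [hΦ]
      show y₁ = (1 - (t:ℂ)) * f (c 0) + (t:ℂ) * y₁
      rw [hfc0]
      ring
    have := huniq 0 (fun _ => x₁) continuousOn_const (by rw [hc0]) hlift0
    exact (this ⟨zero_le_one, le_refl 1⟩).symm
  have hφ1 : L 1 1 = x₂ := by
    have hlift1 : ∀ t ∈ Icc (0:ℝ) 1, f ((fun _ => x₂) t) = Φ (1, t) := by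
      intro t ht
      show f x₂ = Φ (1, t)
      rw [hΦ]
      show f x₂ = (1 - (t:ℂ)) * f (c 1) + (t:ℂ) * y₁
      rw [hfc1, ← hx]
      ring
    have := huniq 1 (fun _ => x₂) continuousOn_const (by rw [hc1]) hlift1
    exact (this ⟨zero_le_one, le_refl 1⟩).symm
  -- the endpoint map is locally constant
  have hφ_fiber : ∀ s, f (L s 1) = y₁ := by
    intro s
    rw [hL_lift s 1 ⟨zero_le_one, le_refl 1⟩, hΦ]
    show (1 - ((1:ℝ):ℂ)) * f (c s) + ((1:ℝ):ℂ) * y₁ = y₁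
    push_cast
    ring
  set Efix : Set ℝ := {s | L s 1 = x₁} with hEfix
  have hE_closed : IsClosed Efix := isClosed_eq main continuous_const
  have hE_open : IsOpen Efix := by
    have hG : IsClosed (f ⁻¹' {y₁} \ {x₁}) := ((hfin y₁).subset diff_subset).isClosed
    have hEeq : Efix = (fun s => L s 1) ⁻¹' ((f ⁻¹' {y₁} \ {x₁})ᶜ) := by
      ext s
      constructor
      · intro hs hmem
        exact hmem.2 hs
      · intro hs
        by_contra hne
        exact hs ⟨hφ_fiber s, hne⟩
    rw [hEeq]
    exact hG.isOpen_compl.preimage main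
  have hEuniv : Efix = univ := IsClopen.eq_univ ⟨hE_closed, hE_open⟩ ⟨0, hφ0⟩
  have h1E : (1:ℝ) ∈ Efix := hEuniv ▸ mem_univ 1
  have : L 1 1 = x₁ := h1E
  rw [hφ1] at this
  exact this.symm

/-- **Bijectivity of quasi-conformal maps (paper's Theorem, made precise with
properness).** Let `f : ℂ → ℂ` be `C¹` as a map of `ℝ² ≅ ℂ` and proper. If there
is a constant `k < 1` with `f_z(p) ≠ 0` and `|f_z̄(p)| ≤ k·|f_z(p)|` for every
`p` (i.e. `‖μ‖_∞ ≤ k < 1` for the Beltrami coefficient `μ = f_z̄/f_z`), then `f`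
is bijective. -/
theorem bijective_of_beltrami_bound (f : ℂ → ℂ) (hf : ContDiff ℝ 1 f)
    (hprop : IsProperMap f) (k : ℝ) (hk : k < 1)
    (h : ∀ p : ℂ,
      (fderiv ℝ f p 1 - Complex.I * fderiv ℝ f p Complex.I) / 2 ≠ 0 ∧
      ‖(fderiv ℝ f p 1 + Complex.I * fderiv ℝ f p Complex.I) / 2‖
        ≤ k * ‖(fderiv ℝ f p 1 - Complex.I * fderiv ℝ f p Complex.I) / 2‖) :
    Function.Bijective f := by
  have hl : IsLocalHomeomorph f := beltrami_isLocalHomeomorph f hf k hk h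
  constructor
  · exact qc_injective hl (qc_star_lemma hl hprop) (qc_fiber_finite hl hprop)
      (fun γ hγ x₀ h0 => qc_lift_path hl hprop (qc_star_lemma hl hprop) γ hγ x₀ h0)
  · intro y
    have hopen : IsOpen (range f) := hl.isOpenMap.isOpen_range
    have hclosed : IsClosed (range f) := hprop.isClosedMap.isClosed_range
    have huniv : range f = univ := IsClopen.eq_univ ⟨hclosed, hopen⟩ ⟨f 0, mem_range_self 0⟩
    have : y ∈ range f := by rw [huniv]; exact mem_univ y
    exact this
end

section
/- Define m₀, m₁, m₂ : ℤ → ℝ supported on {−1, 0, 1} by m₀ = (1/3)·(1, 1, 1), m₁ = (√6/6)·(1, 0, −1), m₂ = (√2/6)·(1, −2, 1), and for each p let m̃_p(k) = m_p(−k) be the adjoint (flipped) filter. Then Σ_{p=0}^{2} (m̃_p * m_p) = δ, where * denotes convolution of sequences on ℤ and δ is the Kronecker delta sequence (δ(0) = 1, δ(k) = 0 for k ≠ 0). Equivalently, Σ_{p=0}^{2} Σ_{j∈ℤ} m_p(j)·m_p(j − k) = 1 if k = 0 and 0 otherwise. -/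
/-- The low-pass filter `m₀ = (1/3)·(1,1,1)` supported on `{-1,0,1}`. -/
noncomputable def m0 : ℤ → ℝ := fun k => if k = -1 ∨ k = 0 ∨ k = 1 then 1 / 3 else 0

/-- The high-pass filter `m₁ = (√6/6)·(1,0,−1)` supported on `{-1,0,1}`. -/
noncomputable def m1 : ℤ → ℝ := fun k =>
  if k = -1 then Real.sqrt 6 / 6 else if k = 1 then -(Real.sqrt 6 / 6) else 0

/-- The high-pass filter `m₂ = (√2/6)·(1,−2,1)` supported on `{-1,0,1}`. -/
noncomputable def m2 : ℤ → ℝ := fun k =>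
  if k = -1 ∨ k = 1 then Real.sqrt 2 / 6 else if k = 0 then -(2 * Real.sqrt 2 / 6) else 0

/-- Convolution of sequences on `ℤ`: `(u * v)(k) = Σ_{j∈ℤ} u(j)·v(k − j)`. -/
noncomputable def conv (u v : ℤ → ℝ) : ℤ → ℝ := fun k => ∑ᶠ j : ℤ, u j * v (k - j)

lemma conv_adj_eq (u : ℤ → ℝ) (hu : ∀ x, x ≠ -1 → x ≠ 0 → x ≠ 1 → u x = 0) (k : ℤ) :
    conv (fun j => u (-j)) u k = ∑ j ∈ ({-1, 0, 1} : Finset ℤ), u (-j) * u (k - j) := by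
  apply finsum_eq_finset_sum_of_support_subset
  intro j hj
  simp only [Function.mem_support, ne_eq] at hj
  simp only [Finset.coe_insert, Finset.coe_singleton, Set.mem_insert_iff, Set.mem_singleton_iff]
  by_contra h
  push_neg at h
  exact hj (by rw [hu (-j) (by omega) (by omega) (by omega), zero_mul])

lemma hm0 : ∀ x : ℤ, x ≠ -1 → x ≠ 0 → x ≠ 1 → m0 x = 0 := by
  intro x h1 h2 h3; simp [m0, h1, h2, h3]

lemma hm1 : ∀ x : ℤ, x ≠ -1 → x ≠ 0 → x ≠ 1 → m1 x = 0 := by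
  intro x h1 h2 h3; simp [m1, h1, h3]

lemma hm2 : ∀ x : ℤ, x ≠ -1 → x ≠ 0 → x ≠ 1 → m2 x = 0 := by
  intro x h1 h2 h3; simp [m2, h1, h2, h3]

/-- **Tight-frame filters resolve the Kronecker delta:**
`Σ_{p=0}^{2} (m̃_p * m_p) = δ`, where `m̃_p(k) = m_p(−k)`. -/
theorem sum_adjoint_conv_eq_delta (k : ℤ) :
    conv (fun j => m0 (-j)) m0 k + conv (fun j => m1 (-j)) m1 k
      + conv (fun j => m2 (-j)) m2 k = if k = 0 then 1 else 0 := by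
  have h6 : Real.sqrt 6 * Real.sqrt 6 = 6 :=
    Real.mul_self_sqrt (by norm_num)
  have h2 : Real.sqrt 2 * Real.sqrt 2 = 2 :=
    Real.mul_self_sqrt (by norm_num)
  rw [conv_adj_eq m0 hm0, conv_adj_eq m1 hm1, conv_adj_eq m2 hm2]
  by_cases hk : k = -2 ∨ k = -1 ∨ k = 0 ∨ k = 1 ∨ k = 2
  · rcases hk with h | h | h | h | h <;> subst h <;>
      norm_num [m0, m1, m2, Finset.sum_insert, Finset.mem_insert] <;> ring_nf <;>
      nlinarith [h6, h2]
  · push_neg at hk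
    obtain ⟨h1, h2', h3, h4, h5⟩ := hk
    have z0 : ∀ j ∈ ({-1, 0, 1} : Finset ℤ), m0 (-j) * m0 (k - j) = 0 := by
      intro j hj
      rw [hm0 (k - j) (by fin_cases hj <;> omega) (by fin_cases hj <;> omega)
        (by fin_cases hj <;> omega), mul_zero]
    have z1 : ∀ j ∈ ({-1, 0, 1} : Finset ℤ), m1 (-j) * m1 (k - j) = 0 := by
      intro j hj
      rw [hm1 (k - j) (by fin_cases hj <;> omega) (by fin_cases hj <;> omega)
        (by fin_cases hj <;> omega), mul_zero]
    have z2 : ∀ j ∈ ({-1, 0, 1} : Finset ℤ), m2 (-j) * m2 (k - j) = 0 := by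
      intro j hj
      rw [hm2 (k - j) (by fin_cases hj <;> omega) (by fin_cases hj <;> omega)
        (by fin_cases hj <;> omega), mul_zero]
    rw [Finset.sum_eq_zero z0, Finset.sum_eq_zero z1, Finset.sum_eq_zero z2, if_neg h3]
    ring
end

section
/- Define m₀, m₁, m₂ : ℤ → ℝ supported on {−1, 0, 1} by m₀ = (1/3)·(1, 1, 1), m₁ = (√6/6)·(1, 0, −1), m₂ = (√2/6)·(1, −2, 1), with adjoint filters m̃_p(k) = m_p(−k). Then for every finitely supported sequence I : ℤ → ℝ, the one-level perfect reconstruction identity holds: Σ_{p=0}^{2} m̃_p * (m_p * I) = I, where * denotes convolution of sequences on ℤ. -/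
lemma conv_three (u v : ℤ → ℝ) (hu : ∀ j, j ≠ -1 → j ≠ 0 → j ≠ 1 → u j = 0) (k : ℤ) :
    conv u v k = u (-1) * v (k + 1) + u 0 * v k + u 1 * v (k - 1) := by
  unfold conv
  rw [finsum_eq_finset_sum_of_support_subset _ (s := ({-1, 0, 1} : Finset ℤ))]
  · simp [Finset.sum_insert, sub_neg_eq_add]; ring
  · intro j hj
    simp only [Function.mem_support] at hj
    by_contra hmem
    simp only [Finset.coe_insert, Finset.coe_singleton, Set.mem_insert_iff,
      Set.mem_singleton_iff, not_or] at hmem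
    exact hj (by rw [hu j hmem.1 hmem.2.1 hmem.2.2]; ring)

/-- **One-level perfect reconstruction:** for every finitely supported sequence
`I : ℤ → ℝ`, `Σ_{p=0}^{2} m̃_p * (m_p * I) = I`, where `m̃_p(k) = m_p(−k)`. -/
theorem one_level_perfect_reconstruction (I : ℤ → ℝ)
    (hI : (Function.support I).Finite) (k : ℤ) :
    conv (fun j => m0 (-j)) (conv m0 I) k + conv (fun j => m1 (-j)) (conv m1 I) k
      + conv (fun j => m2 (-j)) (conv m2 I) k = I k := by
  have h0 : ∀ j : ℤ, j ≠ -1 → j ≠ 0 → j ≠ 1 → m0 j = 0 := by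
    intro j h1 h2 h3; simp [m0, h1, h2, h3]
  have h1' : ∀ j : ℤ, j ≠ -1 → j ≠ 0 → j ≠ 1 → m1 j = 0 := by
    intro j h1 h2 h3; simp [m1, h1, h3]
  have h2' : ∀ j : ℤ, j ≠ -1 → j ≠ 0 → j ≠ 1 → m2 j = 0 := by
    intro j h1 h2 h3; simp [m2, h1, h2, h3]
  have h0' : ∀ j : ℤ, j ≠ -1 → j ≠ 0 → j ≠ 1 → m0 (-j) = 0 := by
    intro j a b c; exact h0 (-j) (by omega) (by omega) (by omega)
  have h1'' : ∀ j : ℤ, j ≠ -1 → j ≠ 0 → j ≠ 1 → m1 (-j) = 0 := by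
    intro j a b c; exact h1' (-j) (by omega) (by omega) (by omega)
  have h2'' : ∀ j : ℤ, j ≠ -1 → j ≠ 0 → j ≠ 1 → m2 (-j) = 0 := by
    intro j a b c; exact h2' (-j) (by omega) (by omega) (by omega)
  rw [conv_three _ _ h0', conv_three _ _ h1'', conv_three _ _ h2'',
      conv_three _ _ h0, conv_three _ _ h0, conv_three _ _ h0,
      conv_three _ _ h1', conv_three _ _ h1', conv_three _ _ h1',
      conv_three _ _ h2', conv_three _ _ h2', conv_three _ _ h2']
  have s6 : Real.sqrt 6 ^ 2 = 6 := Real.sq_sqrt (by norm_num)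
  have s2 : Real.sqrt 2 ^ 2 = 2 := Real.sq_sqrt (by norm_num)
  simp only [m0, m1, m2]
  norm_num
  ring_nf
  simp only [s6, s2]
  ring
end

section
/- Define m₀, m₁, m₂ : ℤ → ℝ supported on {−1, 0, 1} by m₀ = (1/3)·(1, 1, 1), m₁ = (√6/6)·(1, 0, −1), m₂ = (√2/6)·(1, −2, 1). Then the tight-frame transform preserves energy (Parseval identity): for every finitely supported sequence I : ℤ → ℝ, Σ_{p=0}^{2} Σ_{k∈ℤ} ((m_p * I)(k))² = Σ_{k∈ℤ} (I(k))², where * denotes convolution of sequences on ℤ. -/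
lemma conv_eval (u I : ℤ → ℝ) (hu : ∀ j, j ≠ -1 → j ≠ 0 → j ≠ 1 → u j = 0) (k : ℤ) :
    conv u I k = u (-1) * I (k + 1) + u 0 * I k + u 1 * I (k - 1) := by
  have hsub : Function.support (fun j => u j * I (k - j)) ⊆ (({-1, 0, 1} : Finset ℤ) : Set ℤ) := by
    intro j hj
    simp only [Function.mem_support] at hj
    by_contra h
    simp only [Finset.coe_insert, Finset.coe_singleton, Set.mem_insert_iff,
      Set.mem_singleton_iff, not_or] at h
    exact hj (by rw [hu j h.1 h.2.1 h.2.2, zero_mul])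
  rw [conv, finsum_eq_finset_sum_of_support_subset _ hsub]
  norm_num [Finset.sum_insert, Finset.mem_insert]
  ring_nf

/-- **Parseval identity for the tight-frame transform:** for every finitely
supported sequence `I : ℤ → ℝ`,
`Σ_{p=0}^{2} Σ_{k∈ℤ} ((m_p * I)(k))² = Σ_{k∈ℤ} (I(k))²`. -/
theorem tight_frame_parseval (I : ℤ → ℝ) (hI : (Function.support I).Finite) :
    (∑ᶠ k : ℤ, (conv m0 I k) ^ 2) + (∑ᶠ k : ℤ, (conv m1 I k) ^ 2)
      + (∑ᶠ k : ℤ, (conv m2 I k) ^ 2) = ∑ᶠ k : ℤ, (I k) ^ 2 := by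
  have h0 : ∀ k, conv m0 I k = (I (k + 1) + I k + I (k - 1)) / 3 := by
    intro k
    rw [conv_eval m0 I (fun j h1 h2 h3 => by simp [m0, h1, h2, h3])]
    simp [m0]; ring
  have h1 : ∀ k, conv m1 I k = Real.sqrt 6 / 6 * (I (k + 1) - I (k - 1)) := by
    intro k
    rw [conv_eval m1 I (fun j h1 h2 h3 => by simp [m1, h1, h2, h3])]
    simp [m1]; ring
  have h2 : ∀ k, conv m2 I k = Real.sqrt 2 / 6 * (I (k + 1) - 2 * I k + I (k - 1)) := by
    intro k
    rw [conv_eval m2 I (fun j h1 h2 h3 => by simp [m2, h1, h2, h3])]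
    simp [m2]; ring
  have key : ∀ k, conv m0 I k ^ 2 + conv m1 I k ^ 2 + conv m2 I k ^ 2
      = (1 / 3) * (I (k + 1) ^ 2 + I k ^ 2 + I (k - 1) ^ 2) := by
    intro k
    rw [h0, h1, h2]
    have s6 : Real.sqrt 6 ^ 2 = 6 := Real.sq_sqrt (by norm_num)
    have s2 : Real.sqrt 2 ^ 2 = 2 := Real.sq_sqrt (by norm_num)
    linear_combination ((I (k + 1) - I (k - 1)) ^ 2 / 36) * s6
      + ((I (k + 1) - 2 * I k + I (k - 1)) ^ 2 / 36) * s2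
  -- finiteness facts
  have hSfin : ((fun x => x - 1) '' Function.support I ∪ Function.support I
      ∪ (fun x => x + 1) '' Function.support I).Finite :=
    ((hI.image _).union hI).union (hI.image _)
  have hmem : ∀ k : ℤ, I (k + 1) = 0 → I k = 0 → I (k - 1) = 0 →
      k ∉ ((fun x => x - 1) '' Function.support I ∪ Function.support I
        ∪ (fun x => x + 1) '' Function.support I) → True := fun _ _ _ _ _ => trivial
  have hsub : ∀ f : ℤ → ℝ, (∀ k, I (k + 1) = 0 → I k = 0 → I (k - 1) = 0 → f k = 0) →
      (Function.support f).Finite := by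
    intro f hf
    refine hSfin.subset fun k hk => ?_
    simp only [Function.mem_support] at hk
    by_contra hc
    simp only [Set.mem_union, Set.mem_image, Function.mem_support, not_or, not_exists,
      not_and] at hc
    obtain ⟨⟨hc1, hc2⟩, hc3⟩ := hc
    have e1 : I (k + 1) = 0 := by
      by_contra h; exact (hc1 (k + 1)) (by simpa using h) (by ring)
    have e2 : I k = 0 := by_contra fun h => hc2 h
    have e3 : I (k - 1) = 0 := by
      by_contra h; exact (hc3 (k - 1)) (by simpa using h) (by ring)
    exact hk (hf k e1 e2 e3)
  have fin0 : (Function.support fun k => conv m0 I k ^ 2).Finite :=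
    hsub _ fun k e1 e2 e3 => by rw [h0, e1, e2, e3]; norm_num
  have fin1 : (Function.support fun k => conv m1 I k ^ 2).Finite :=
    hsub _ fun k e1 e2 e3 => by rw [h1, e1, e3]; norm_num
  have fin2 : (Function.support fun k => conv m2 I k ^ 2).Finite :=
    hsub _ fun k e1 e2 e3 => by rw [h2, e1, e2, e3]; norm_num
  have finA : (Function.support fun k => I (k + 1) ^ 2).Finite :=
    hsub _ fun k e1 _ _ => by rw [e1]; norm_num
  have finB : (Function.support fun k => I k ^ 2).Finite :=
    hsub _ fun k _ e2 _ => by rw [e2]; norm_num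
  have finC : (Function.support fun k => I (k - 1) ^ 2).Finite :=
    hsub _ fun k _ _ e3 => by rw [e3]; norm_num
  have fin01 : (Function.support fun k => conv m0 I k ^ 2 + conv m1 I k ^ 2).Finite :=
    hsub _ fun k e1 e2 e3 => by rw [h0, h1, e1, e2, e3]; norm_num
  have finAB : (Function.support fun k => I (k + 1) ^ 2 + I k ^ 2).Finite :=
    hsub _ fun k e1 e2 _ => by rw [e1, e2]; norm_num
  have finABC : (Function.support fun k => I (k + 1) ^ 2 + I k ^ 2 + I (k - 1) ^ 2).Finite :=
    hsub _ fun k e1 e2 e3 => by rw [e1, e2, e3]; norm_num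
  rw [← finsum_add_distrib fin0 fin1, ← finsum_add_distrib fin01 fin2]
  have step : (∑ᶠ k : ℤ, (conv m0 I k ^ 2 + conv m1 I k ^ 2 + conv m2 I k ^ 2))
      = ∑ᶠ k : ℤ, (1 / 3 : ℝ) * (I (k + 1) ^ 2 + I k ^ 2 + I (k - 1) ^ 2) :=
    finsum_congr key
  rw [step, ← mul_finsum _ _,
    finsum_add_distrib finAB finC, finsum_add_distrib finA finB]
  have eA : (∑ᶠ k : ℤ, I (k + 1) ^ 2) = ∑ᶠ k : ℤ, I k ^ 2 :=
    finsum_comp_equiv (Equiv.addRight 1) (f := fun k => I k ^ 2)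
  have eC : (∑ᶠ k : ℤ, I (k - 1) ^ 2) = ∑ᶠ k : ℤ, I k ^ 2 :=
    finsum_comp_equiv (Equiv.subRight 1) (f := fun k => I k ^ 2)
  rw [eA, eC]; ring
end

section
/- Define m₀, m₁, m₂ : ℤ → ℝ supported on {−1, 0, 1} by m₀ = (1/3)·(1, 1, 1), m₁ = (√6/6)·(1, 0, −1), m₂ = (√2/6)·(1, −2, 1), and define the nine 2D tensor-product filters W_{p,q} : ℤ² → ℝ by W_{p,q}(j, k) = m_p(j)·m_q(k) for p, q ∈ {0, 1, 2}, with adjoints W̃_{p,q}(j, k) = W_{p,q}(−j, −k). Then for every finitely supported image I : ℤ² → ℝ, the two-dimensional perfect reconstruction identity holds: Σ_{p=0}^{2} Σ_{q=0}^{2} W̃_{p,q} * (W_{p,q} * I) = I, where * denotes convolution of functions on ℤ². -/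
/-- The three filters indexed by `Fin 3`. -/
noncomputable def m : Fin 3 → ℤ → ℝ := ![m0, m1, m2]

/-- The nine 2D tensor-product filters `W_{p,q}(j,k) = m_p(j)·m_q(k)`. -/
noncomputable def W (p q : Fin 3) : ℤ × ℤ → ℝ := fun x => m p x.1 * m q x.2

/-- Convolution of functions on `ℤ²`: `(u * v)(x) = Σ_{y∈ℤ²} u(y)·v(x − y)`. -/
noncomputable def conv2 (u v : ℤ × ℤ → ℝ) : ℤ × ℤ → ℝ :=
  fun x => ∑ᶠ y : ℤ × ℤ, u y * v (x - y)

def box : Finset (ℤ × ℤ) := ({-1,0,1} : Finset ℤ) ×ˢ ({-1,0,1} : Finset ℤ)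

@[simp] lemma m_zero' : m 0 = m0 := rfl
@[simp] lemma m_one' : m 1 = m1 := rfl
@[simp] lemma m_two' : m 2 = m2 := rfl

@[simp] lemma m0_neg_one : m0 (-1) = 1/3 := by norm_num [m0]
@[simp] lemma m0_zero : m0 0 = 1/3 := by norm_num [m0]
@[simp] lemma m0_one : m0 1 = 1/3 := by norm_num [m0]
@[simp] lemma m1_neg_one : m1 (-1) = Real.sqrt 6 / 6 := by norm_num [m1]
@[simp] lemma m1_zero : m1 0 = 0 := by norm_num [m1]
@[simp] lemma m1_one : m1 1 = -(Real.sqrt 6 / 6) := by norm_num [m1]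
@[simp] lemma m2_neg_one : m2 (-1) = Real.sqrt 2 / 6 := by norm_num [m2]
@[simp] lemma m2_zero : m2 0 = -(2 * Real.sqrt 2 / 6) := by norm_num [m2]
@[simp] lemma m2_one : m2 1 = Real.sqrt 2 / 6 := by norm_num [m2]

lemma m_zero (p : Fin 3) (j : ℤ) (h1 : j ≠ -1) (h2 : j ≠ 0) (h3 : j ≠ 1) : m p j = 0 := by
  fin_cases p
  · show m0 j = 0; simp [m0, h1, h2, h3]
  · show m1 j = 0; simp [m1, h1, h2, h3]
  · show m2 j = 0; simp [m2, h1, h2, h3]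

lemma W_zero (p q : Fin 3) (y : ℤ × ℤ) (h : y ∉ box) : W p q y = 0 := by
  simp only [box, Finset.mem_product, not_and_or, Finset.mem_insert,
    Finset.mem_singleton, not_or] at h
  rcases h with ⟨h1, h2, h3⟩ | ⟨h1, h2, h3⟩
  · simp [W, m_zero p _ h1 h2 h3]
  · simp [W, m_zero q _ h1 h2 h3]

lemma conv2_eq (u v : ℤ × ℤ → ℝ) (hu : ∀ y ∉ box, u y = 0) (x : ℤ × ℤ) :
    conv2 u v x = ∑ y ∈ box, u y * v (x - y) := by
  apply finsum_eq_sum_of_support_subset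
  intro y hy
  by_contra h
  exact hy (by simp [hu y h])

set_option maxHeartbeats 4000000 in
/-- **Two-dimensional perfect reconstruction:** for every finitely supported
image `I : ℤ² → ℝ`, `Σ_{p=0}^{2} Σ_{q=0}^{2} W̃_{p,q} * (W_{p,q} * I) = I`,
where `W̃_{p,q}(x) = W_{p,q}(−x)`. -/
theorem two_dim_perfect_reconstruction (I : ℤ × ℤ → ℝ)
    (hI : (Function.support I).Finite) (x : ℤ × ℤ) :
    ∑ p : Fin 3, ∑ q : Fin 3, conv2 (fun y => W p q (-y)) (conv2 (W p q) I) x = I x := by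
  have key : ∀ p q : Fin 3, conv2 (fun y => W p q (-y)) (conv2 (W p q) I) x
      = ∑ y ∈ box, ∑ z ∈ box, W p q (-y) * (W p q z * I (x - (y + z))) := by
    intro p q
    rw [conv2_eq _ _ (fun y hy => W_zero p q (-y) (by
      simp only [box, Finset.mem_product, Finset.mem_insert, Finset.mem_singleton,
        Prod.fst_neg, Prod.snd_neg] at hy ⊢
      push_neg at hy ⊢
      omega)) x]
    refine Finset.sum_congr rfl fun y _ => ?_
    rw [conv2_eq _ _ (W_zero p q), Finset.mul_sum]
    refine Finset.sum_congr rfl fun z _ => ?_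
    rw [sub_sub]
  simp only [key]
  simp only [box, Finset.sum_product, Fin.sum_univ_three]
  simp only [show ∀ f : ℤ → ℝ, ∑ j ∈ ({-1,0,1} : Finset ℤ), f j = f (-1) + f 0 + f 1 from
    fun f => by rw [Finset.sum_insert (by decide), Finset.sum_insert (by decide),
      Finset.sum_singleton]; ring]
  simp only [W, Prod.neg_mk, Prod.mk_add_mk, m_zero', m_one', m_two',
    m0_neg_one, m0_zero, m0_one, m1_neg_one, m1_zero, m1_one,
    m2_neg_one, m2_zero, m2_one, Int.reduceNeg, Int.reduceAdd, neg_neg, neg_zero,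
    Prod.mk_zero_zero, Prod.fst_zero, Prod.snd_zero, sub_zero, zero_mul, mul_zero, add_zero, zero_add]
  have h2 : Real.sqrt 2 ^ 2 = 2 := Real.sq_sqrt (by norm_num)
  have h6 : Real.sqrt 6 ^ 2 = 6 := Real.sq_sqrt (by norm_num)
  have h23 : Real.sqrt 2 ^ 3 = 2 * Real.sqrt 2 := by rw [pow_succ, h2]
  have h63 : Real.sqrt 6 ^ 3 = 6 * Real.sqrt 6 := by rw [pow_succ, h6]
  have h24 : Real.sqrt 2 ^ 4 = 4 := by
    rw [show Real.sqrt 2 ^ 4 = (Real.sqrt 2 ^ 2) ^ 2 by ring, h2]; norm_num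
  have h64 : Real.sqrt 6 ^ 4 = 36 := by
    rw [show Real.sqrt 6 ^ 4 = (Real.sqrt 6 ^ 2) ^ 2 by ring, h6]; norm_num
  ring_nf
  simp only [h2, h6, h23, h63, h24, h64]
  ring_nf
end

section
/- Let m₀, m₁, …, m_r : ℤ → ℝ be finitely supported filters satisfying the Unitary Extension Principle: Σ_{p=0}^{r} |m̂_p(ξ)|² = 1 for every ξ ∈ ℝ, where m̂_p(ξ) = Σ_{k∈ℤ} m_p(k)·e^{−ikξ}. Then for every finitely supported sequence I : ℤ → ℝ, Σ_{p=0}^{r} m̃_p * (m_p * I) = I, where m̃_p(k) = m_p(−k) and * denotes convolution of sequences on ℤ. That is, filters satisfying the UEP give perfect reconstruction. -/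
/-- Fourier transform of a finitely supported filter: `m̂(ξ) = Σ_{k∈ℤ} m(k)·e^{−ikξ}`. -/
noncomputable def ftrans (m : ℤ → ℝ) (ξ : ℝ) : ℂ :=
  ∑ᶠ k : ℤ, (m k : ℂ) * Complex.exp (-(((k : ℝ) * ξ : ℝ) : ℂ) * Complex.I)

open intervalIntegral in
lemma integral_exp_int_aux (n : ℤ) :
    (∫ x in (0:ℝ)..(2*Real.pi), Complex.exp ((n:ℂ) * x * Complex.I)) =
      if n = 0 then ((2*Real.pi : ℝ) : ℂ) else 0 := by
  rcases eq_or_ne n 0 with h | h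
  · simp [h]
  · rw [if_neg h]
    have hc : (n:ℂ) * Complex.I ≠ 0 :=
      mul_ne_zero (by exact_mod_cast h) Complex.I_ne_zero
    have hrw : ∀ x : ℝ, (n:ℂ) * x * Complex.I = ((n:ℂ) * Complex.I) * x := fun x => by ring
    simp_rw [hrw]
    rw [integral_exp_mul_complex hc]
    have h1 : (n:ℂ) * Complex.I * ((2*Real.pi : ℝ):ℂ) = (n:ℂ) * (2 * Real.pi * Complex.I) := by
      push_cast; ring
    rw [h1, Complex.exp_int_mul_two_pi_mul_I]
    simp

/-- **The Unitary Extension Principle implies perfect reconstruction:**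
if finitely supported filters `m₀, …, m_r` satisfy `Σ_{p=0}^{r} |m̂_p(ξ)|² = 1`
for every `ξ ∈ ℝ`, then `Σ_{p=0}^{r} m̃_p * (m_p * I) = I` for every finitely
supported sequence `I : ℤ → ℝ`, where `m̃_p(k) = m_p(−k)`. -/
theorem uep_implies_perfect_reconstruction (r : ℕ) (m : Fin (r + 1) → ℤ → ℝ)
    (hm : ∀ p, (Function.support (m p)).Finite)
    (hUEP : ∀ ξ : ℝ, ∑ p : Fin (r + 1), ‖ftrans (m p) ξ‖ ^ 2 = 1)
    (I : ℤ → ℝ) (hI : (Function.support I).Finite) (k : ℤ) :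
    ∑ p : Fin (r + 1), conv (fun j => m p (-j)) (conv (m p) I) k = I k := by
  classical
  set S : Finset ℤ := ((Set.finite_iUnion fun p => hm p).union hI).toFinset with hSdef
  have hmS : ∀ p j, j ∉ S → m p j = 0 := by
    intro p j hj
    by_contra h
    exact hj (by
      rw [hSdef, Set.Finite.mem_toFinset]
      exact Or.inl (Set.mem_iUnion.2 ⟨p, h⟩))
  have hIS : ∀ j, j ∉ S → I j = 0 := by
    intro j hj
    by_contra h
    exact hj (by rw [hSdef, Set.Finite.mem_toFinset]; exact Or.inr h)
  -- ftrans as a finset sum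
  have hft : ∀ p ξ, ftrans (m p) ξ
      = ∑ j ∈ S, (m p j : ℂ) * Complex.exp (-(((j : ℝ) * ξ : ℝ) : ℂ) * Complex.I) := by
    intro p ξ
    refine finsum_eq_finset_sum_of_support_subset _ ?_
    intro j hj
    simp only [Function.mem_support] at hj
    by_contra hjS
    exact hj (by simp [hmS p j hjS])
  set A : ℤ → ℤ → ℝ := fun j l => ∑ p, m p j * m p l with hA
  have hAS : ∀ j l, l ∉ S → A j l = 0 := by
    intro j l hl
    simp [hA, hmS _ _ hl]
  have hAS' : ∀ j l, j ∉ S → A j l = 0 := by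
    intro j l hj
    simp [hA, hmS _ _ hj]
  -- pointwise identity from UEP
  have key : ∀ ξ : ℝ,
      ∑ j ∈ S, ∑ l ∈ S, (A j l : ℂ) * Complex.exp (((l:ℂ) - (j:ℂ)) * (ξ:ℂ) * Complex.I) = 1 := by
    intro ξ
    have h1 : (∑ p : Fin (r + 1), ((‖ftrans (m p) ξ‖ ^ 2 : ℝ) : ℂ)) = 1 := by
      rw [← Complex.ofReal_sum, hUEP ξ, Complex.ofReal_one]
    have h2 : ∀ p : Fin (r + 1), ((‖ftrans (m p) ξ‖ ^ 2 : ℝ) : ℂ)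
        = ftrans (m p) ξ * (starRingEnd ℂ) (ftrans (m p) ξ) := by
      intro p
      rw [Complex.mul_conj, ← Complex.sq_norm]
    have h3 : ∀ p : Fin (r + 1), ftrans (m p) ξ * (starRingEnd ℂ) (ftrans (m p) ξ)
        = ∑ j ∈ S, ∑ l ∈ S, ((m p j : ℂ) * (m p l : ℂ))
            * Complex.exp (((l:ℂ) - (j:ℂ)) * (ξ:ℂ) * Complex.I) := by
      intro p
      rw [hft p ξ, map_sum, Finset.sum_mul_sum]
      refine Finset.sum_congr rfl fun j _ => Finset.sum_congr rfl fun l _ => ?_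
      rw [map_mul, Complex.conj_ofReal, ← Complex.exp_conj]
      rw [mul_mul_mul_comm, ← Complex.exp_add]
      congr 1
      simp only [map_mul, map_neg, Complex.conj_ofReal, Complex.conj_I]
      push_cast
      ring
    have h4 : (∑ p : Fin (r+1), ((‖ftrans (m p) ξ‖ ^ 2 : ℝ) : ℂ))
        = ∑ j ∈ S, ∑ l ∈ S, (A j l : ℂ) * Complex.exp (((l:ℂ) - (j:ℂ)) * (ξ:ℂ) * Complex.I) :=
      calc ∑ p : Fin (r+1), ((‖ftrans (m p) ξ‖ ^ 2 : ℝ) : ℂ)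
          = ∑ p : Fin (r+1), ∑ j ∈ S, ∑ l ∈ S, ((m p j : ℂ) * (m p l : ℂ))
            * Complex.exp (((l:ℂ) - (j:ℂ)) * (ξ:ℂ) * Complex.I) := by
            refine Finset.sum_congr rfl fun p _ => ?_
            rw [h2 p, h3 p]
        _ = ∑ j ∈ S, ∑ l ∈ S, (A j l : ℂ) * Complex.exp (((l:ℂ) - (j:ℂ)) * (ξ:ℂ) * Complex.I) := by
            rw [Finset.sum_comm]
            refine Finset.sum_congr rfl fun j _ => ?_
            rw [Finset.sum_comm]
            refine Finset.sum_congr rfl fun l _ => ?_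
            rw [← Finset.sum_mul]
            congr 1
            simp [hA]
    rw [← h4]
    exact h1
  -- coefficient extraction
  have hc : ∀ d : ℤ, (∑ j ∈ S, A j (j + d)) = if d = 0 then 1 else 0 := by
    intro d
    have hkey2 : ∀ ξ : ℝ,
        ∑ q ∈ S ×ˢ S, (A q.1 q.2 : ℂ)
          * Complex.exp (((q.2 - q.1 - d : ℤ) : ℂ) * (ξ:ℂ) * Complex.I)
        = Complex.exp (((-d : ℤ) : ℂ) * (ξ:ℂ) * Complex.I) := by
      intro ξ
      have := key ξ
      calc ∑ q ∈ S ×ˢ S, (A q.1 q.2 : ℂ)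
            * Complex.exp (((q.2 - q.1 - d : ℤ) : ℂ) * (ξ:ℂ) * Complex.I)
          = (∑ j ∈ S, ∑ l ∈ S, (A j l : ℂ)
              * Complex.exp (((l:ℂ) - (j:ℂ)) * (ξ:ℂ) * Complex.I))
            * Complex.exp (((-d : ℤ) : ℂ) * (ξ:ℂ) * Complex.I) := by
            rw [Finset.sum_mul, Finset.sum_product]
            refine Finset.sum_congr rfl fun j _ => ?_
            rw [Finset.sum_mul]
            refine Finset.sum_congr rfl fun l _ => ?_
            show (A j l : ℂ) * Complex.exp (((l - j - d : ℤ) : ℂ) * (ξ:ℂ) * Complex.I)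
              = (A j l : ℂ) * Complex.exp (((l:ℂ) - (j:ℂ)) * (ξ:ℂ) * Complex.I)
                * Complex.exp (((-d : ℤ) : ℂ) * (ξ:ℂ) * Complex.I)
            conv_rhs => rw [mul_assoc]
            rw [← Complex.exp_add]
            congr 2
            push_cast
            ring
        _ = Complex.exp (((-d : ℤ) : ℂ) * (ξ:ℂ) * Complex.I) := by rw [this, one_mul]
    -- integrate both sides over [0, 2π]
    have hint : ∀ c : ℂ, IntervalIntegrable (fun x : ℝ => c * Complex.exp ((c:ℂ) * x * Complex.I))
        MeasureTheory.volume 0 (2*Real.pi) := by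
      intro c
      exact (Continuous.intervalIntegrable (by fun_prop) _ _)
    have hLHS :
        (∫ x in (0:ℝ)..(2*Real.pi),
          ∑ q ∈ S ×ˢ S, (A q.1 q.2 : ℂ)
            * Complex.exp (((q.2 - q.1 - d : ℤ) : ℂ) * (x:ℂ) * Complex.I))
        = ∑ q ∈ S ×ˢ S, (A q.1 q.2 : ℂ)
            * (if q.2 - q.1 - d = 0 then ((2*Real.pi : ℝ) : ℂ) else 0) := by
      rw [intervalIntegral.integral_finset_sum]
      · refine Finset.sum_congr rfl fun q _ => ?_
        rw [intervalIntegral.integral_const_mul, integral_exp_int_aux]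
      · intro q _
        exact (Continuous.intervalIntegrable (by fun_prop) _ _)
    have hRHS :
        (∫ x in (0:ℝ)..(2*Real.pi), Complex.exp (((-d : ℤ) : ℂ) * (x:ℂ) * Complex.I))
        = if d = 0 then ((2*Real.pi : ℝ) : ℂ) else 0 := by
      rw [integral_exp_int_aux]
      simp [neg_eq_zero]
    have heq : (∑ q ∈ S ×ˢ S, (A q.1 q.2 : ℂ)
            * (if q.2 - q.1 - d = 0 then ((2*Real.pi : ℝ) : ℂ) else 0))
        = if d = 0 then ((2*Real.pi : ℝ) : ℂ) else 0 := by
      rw [← hLHS, ← hRHS]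
      exact intervalIntegral.integral_congr fun x _ => hkey2 x
    -- simplify the LHS sum
    have hsum : (∑ q ∈ S ×ˢ S, (A q.1 q.2 : ℂ)
            * (if q.2 - q.1 - d = 0 then ((2*Real.pi : ℝ) : ℂ) else 0))
        = ((2*Real.pi : ℝ) : ℂ) * ((∑ j ∈ S, A j (j + d) : ℝ) : ℂ) := by
      rw [Finset.sum_product, Complex.ofReal_sum, Finset.mul_sum]
      refine Finset.sum_congr rfl fun j _ => ?_
      have hcond : ∀ l : ℤ, ((if l - j - d = 0 then ((2*Real.pi : ℝ) : ℂ) else 0))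
          = if l = j + d then ((2*Real.pi : ℝ) : ℂ) else 0 := by
        intro l
        have : l - j - d = 0 ↔ l = j + d := by omega
        simp [this]
      simp_rw [hcond, mul_ite, mul_zero, Finset.sum_ite_eq' S (j + d)]
      by_cases hjd : j + d ∈ S
      · rw [if_pos hjd]; ring
      · rw [if_neg hjd, hAS j (j+d) hjd]; simp
    rw [hsum] at heq
    have hpi : ((2*Real.pi : ℝ) : ℂ) ≠ 0 := by
      simp [Real.pi_ne_zero]
    by_cases hd : d = 0
    · rw [if_pos hd]
      rw [if_pos hd] at heq
      have h5 : ((2*Real.pi : ℝ):ℂ) * ((∑ j ∈ S, A j (j + d) : ℝ) : ℂ)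
          = ((2*Real.pi : ℝ):ℂ) * 1 := by rw [heq, mul_one]
      have := mul_left_cancel₀ hpi h5
      exact_mod_cast this
    · rw [if_neg hd]
      rw [if_neg hd] at heq
      have h5 : ((2*Real.pi : ℝ):ℂ) * ((∑ j ∈ S, A j (j + d) : ℝ) : ℂ)
          = ((2*Real.pi : ℝ):ℂ) * 0 := by rw [heq, mul_zero]
      have := mul_left_cancel₀ hpi h5
      exact_mod_cast this
  -- expand the convolutions
  have hconv1 : ∀ p n, conv (m p) I n = ∑ j ∈ S, m p j * I (n - j) := by
    intro p n
    refine finsum_eq_finset_sum_of_support_subset _ ?_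
    intro j hj
    simp only [Function.mem_support] at hj
    by_contra hjS
    exact hj (by simp [hmS p j hjS])
  have hconv2 : ∀ p, conv (fun j => m p (-j)) (conv (m p) I) k
      = ∑ j ∈ S, m p j * conv (m p) I (k + j) := by
    intro p
    show (∑ᶠ j : ℤ, m p (-j) * conv (m p) I (k - j)) = _
    have e1 : (∑ᶠ j : ℤ, m p (-j) * conv (m p) I (k - j))
        = ∑ᶠ j : ℤ, m p j * conv (m p) I (k + j) := by
      rw [← finsum_comp_equiv (Equiv.neg ℤ) (f := fun j => m p (-j) * conv (m p) I (k - j))]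
      refine finsum_congr fun j => ?_
      simp [sub_neg_eq_add]
    rw [e1]
    refine finsum_eq_finset_sum_of_support_subset _ ?_
    intro j hj
    simp only [Function.mem_support] at hj
    by_contra hjS
    exact hj (by simp [hmS p j hjS])
  -- put it all together
  have hLHS2 : ∑ p : Fin (r + 1), conv (fun j => m p (-j)) (conv (m p) I) k
      = ∑ j ∈ S, ∑ l ∈ S, A j l * I (k + j - l) := by
    calc ∑ p : Fin (r + 1), conv (fun j => m p (-j)) (conv (m p) I) k
        = ∑ p : Fin (r+1), ∑ j ∈ S, ∑ l ∈ S, m p j * m p l * I (k + j - l) := by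
          refine Finset.sum_congr rfl fun p _ => ?_
          rw [hconv2 p]
          refine Finset.sum_congr rfl fun j _ => ?_
          rw [hconv1 p (k + j), Finset.mul_sum]
          refine Finset.sum_congr rfl fun l _ => ?_
          ring
      _ = ∑ j ∈ S, ∑ l ∈ S, A j l * I (k + j - l) := by
          rw [Finset.sum_comm]
          refine Finset.sum_congr rfl fun j _ => ?_
          rw [Finset.sum_comm]
          refine Finset.sum_congr rfl fun l _ => ?_
          rw [hA, Finset.sum_mul]
  rw [hLHS2]
  -- reindex the inner sum by the difference d = l - j
  set D : Finset ℤ := (S ×ˢ S).image (fun q => q.2 - q.1) with hD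
  have hjl : ∀ j ∈ S, (∑ l ∈ S, A j l * I (k + j - l)) = ∑ d ∈ D, A j (j + d) * I (k - d) := by
    intro j hj
    have hinj : Function.Injective (fun d : ℤ => j + d) := add_right_injective j
    have himg : (∑ d ∈ D, A j (j + d) * I (k - d))
        = ∑ l ∈ D.image (fun d => j + d), A j l * I (k + j - l) := by
      rw [Finset.sum_image (fun a _ b _ h => hinj h)]
      refine Finset.sum_congr rfl fun d _ => ?_
      rw [show k + j - (j + d) = k - d from by omega]
    rw [himg]
    have hsub : S ⊆ D.image (fun d => j + d) := by
      intro l hl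
      refine Finset.mem_image.2 ⟨l - j, ?_, by omega⟩
      rw [hD]
      exact Finset.mem_image.2 ⟨(j, l), Finset.mem_product.2 ⟨hj, hl⟩, rfl⟩
    refine Finset.sum_subset hsub ?_
    intro l _ hlS
    rw [hAS j l hlS, zero_mul]
  have hstep : ∀ d ∈ D, (∑ j ∈ S, A j (j + d) * I (k - d))
      = if d = 0 then I k else 0 := by
    intro d _
    rw [← Finset.sum_mul, hc d]
    by_cases hd : d = 0
    · simp [hd]
    · simp [hd]
  have hSne : S.Nonempty := by
    by_contra h
    rw [Finset.not_nonempty_iff_eq_empty] at h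
    have := hc 0
    rw [h] at this
    simp at this
  obtain ⟨s, hs⟩ := hSne
  have h0D : (0 : ℤ) ∈ D := by
    rw [hD]
    exact Finset.mem_image.2 ⟨(s, s), Finset.mem_product.2 ⟨hs, hs⟩, by simp⟩
  calc ∑ j ∈ S, ∑ l ∈ S, A j l * I (k + j - l)
      = ∑ j ∈ S, ∑ d ∈ D, A j (j + d) * I (k - d) := Finset.sum_congr rfl hjl
    _ = ∑ d ∈ D, ∑ j ∈ S, A j (j + d) * I (k - d) := Finset.sum_comm
    _ = ∑ d ∈ D, if d = 0 then I k else 0 := Finset.sum_congr rfl hstep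
    _ = if (0:ℤ) ∈ D then I k else 0 := Finset.sum_ite_eq' D 0 (fun _ => I k)
    _ = I k := if_pos h0D
end
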